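/- arXiv:1703.00859 — 2 statements merged into one kernel-verified Lean document; each statement's English description precedes it below -/
import Mathlib

section
/- For the 3×4 matrix X₅ = [[1,1,1,1],[1,1,1,0],[1,0,0,0]], the largest singular value satisfies σ₁(X₅)² < 7, and consequently σ₂(X₅)² + σ₃(X₅)² > 1. -/
open Matrix BigOperators

/-- The (unordered) singular values of a complex matrix `A`: square roots of the
eigenvalues of `Aᴴ * A`. -/
noncomputable def singVals {m n : ℕ} (A : Matrix (Fin m) (Fin n) ℂ) : Fin n → ℝ :=
  fun i => Real.sqrt ((Matrix.isHermitian_conjTranspose_mul_self A).eigenvalues i)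

/-- The trace norm: sum of the singular values. -/
noncomputable def traceNorm {m n : ℕ} (A : Matrix (Fin m) (Fin n) ℂ) : ℝ :=
  ∑ i, singVals A i

/-- The Frobenius norm. -/
noncomputable def frobNorm {m n : ℕ} (A : Matrix (Fin m) (Fin n) ℂ) : ℝ :=
  Real.sqrt (∑ i, ∑ j, ‖A i j‖ ^ 2)

/-- `sigma A k` is the `k`-th largest singular value of `A` (1-indexed), `0` if out of range. -/
noncomputable def sigma {m n : ℕ} (A : Matrix (Fin m) (Fin n) ℂ) (k : ℕ) : ℝ :=
  if h : 1 ≤ k ∧ k ≤ n then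
    singVals A (Tuple.sort (singVals A) ⟨n - k, by omega⟩)
  else 0

/-- Number of entries of `A` equal to `1`. -/
noncomputable def onesCount {a b : ℕ} (A : Matrix (Fin a) (Fin b) ℂ) : ℕ := by
  classical
  exact Finset.card (Finset.univ.filter fun p : Fin a × Fin b => A p.1 p.2 = 1)

/-- Minimum trace norm of an `n × n` (0,1)-matrix with exactly `m` ones. -/
noncomputable def psi (n m : ℕ) : ℝ :=
  sInf {x | ∃ A : Matrix (Fin n) (Fin n) ℂ, (∀ i j, A i j = 0 ∨ A i j = 1) ∧
    onesCount A = m ∧ traceNorm A = x}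

/-! Write `σ₁ ≥ σ₂ ≥ σ₃ ≥ σ₄` for the singular values of the 3 × 4 matrix `X₅`. Their squares are
the eigenvalues of the Gram matrix `X₅ᴴ X₅`, so `∑ σᵢ² = tr (X₅ᴴ X₅) = 8` and
`∑ σᵢ⁴ = tr ((X₅ᴴ X₅)²) = 48`. Hence `σ₁⁴ ≤ 48 < 49`, i.e. `σ₁² < 7`; and since `X₅` has only three
rows, `σ₄ = 0`, so `σ₂² + σ₃² = 8 - σ₁² > 1`. -/

namespace Matrix.IsHermitian

variable {n 𝕜 : Type*} [Fintype n] [DecidableEq n] [RCLike 𝕜] {A : Matrix n n 𝕜}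

lemma trace_mul_self_eq_sum_eigenvalues_sq (hA : A.IsHermitian) :
    (A * A).trace = ∑ i, (hA.eigenvalues i : 𝕜) ^ 2 := by
  conv_lhs => rw [hA.spectral_theorem, ← map_mul, Unitary.conjStarAlgAut_apply, trace_mul_cycle,
    Unitary.coe_star_mul_self, one_mul, diagonal_mul_diagonal, trace_diagonal]
  simp [sq]

end Matrix.IsHermitian

section SingularValues

variable {m n : ℕ} (A : Matrix (Fin m) (Fin n) ℂ)

lemma singVals_nonneg (i : Fin n) : 0 ≤ singVals A i := Real.sqrt_nonneg _

lemma singVals_sq (i : Fin n) :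
    singVals A i ^ 2 = (isHermitian_conjTranspose_mul_self A).eigenvalues i :=
  Real.sq_sqrt (eigenvalues_conjTranspose_mul_self_nonneg A i)

lemma sum_singVals_sq : ∑ i, singVals A i ^ 2 = ∑ i, ∑ j, ‖A i j‖ ^ 2 := by
  have h := (isHermitian_conjTranspose_mul_self A).trace_eq_sum_eigenvalues
  simp only [trace, diag, mul_apply, conjTranspose_apply, RCLike.star_def, RCLike.conj_mul] at h
  simp_rw [singVals_sq, Finset.sum_comm (γ := Fin m)]
  exact_mod_cast h.symm

lemma sum_singVals_pow_four :
    ((∑ i, singVals A i ^ 4 : ℝ) : ℂ) = (Aᴴ * A * (Aᴴ * A)).trace := by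
  simp_rw [(isHermitian_conjTranspose_mul_self A).trace_mul_self_eq_sum_eigenvalues_sq,
    show ∀ i, singVals A i ^ 4 = (singVals A i ^ 2) ^ 2 from fun i => by ring, singVals_sq]
  push_cast
  rfl

open scoped ComplexOrder in
lemma exists_eigenvalues_conjTranspose_mul_self_eq_zero (h : m < n) :
    ∃ i, (isHermitian_conjTranspose_mul_self A).eigenvalues i = 0 := by
  by_contra! hne
  have hrank := (isHermitian_conjTranspose_mul_self A).rank_eq_card_non_zero_eigs
  rw [rank_conjTranspose_mul_self, Fintype.card_subtype, Finset.filter_true_of_mem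
    (fun i _ => hne i), Finset.card_univ, Fintype.card_fin] at hrank
  have := A.rank_le_height
  omega

lemma sigma_succ (k : Fin n) :
    sigma A (k + 1) = singVals A (Tuple.sort (singVals A) k.rev) := by
  rw [sigma, dif_pos ⟨by omega, k.isLt⟩]
  rfl

lemma sum_sigma_sq : ∑ k : Fin n, sigma A (k + 1) ^ 2 = ∑ i, singVals A i ^ 2 := by
  simp_rw [sigma_succ]
  exact (Fin.revPerm.trans (Tuple.sort (singVals A))).sum_comp (singVals A · ^ 2)

lemma sigma_pow_le_sum (k : Fin n) (p : ℕ) : sigma A (k + 1) ^ p ≤ ∑ i, singVals A i ^ p := by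
  rw [sigma_succ]
  exact Finset.single_le_sum (fun i _ => pow_nonneg (singVals_nonneg A i) p) (Finset.mem_univ _)

lemma sigma_card_eq_zero (h : m < n) : sigma A n = 0 := by
  obtain ⟨i, hi⟩ := exists_eigenvalues_conjTranspose_mul_self_eq_zero A h
  set g := Tuple.sort (singVals A)
  have hi' : singVals A i = 0 := by rw [singVals, hi, Real.sqrt_zero]
  have hmin : singVals A (g ⟨0, by omega⟩) ≤ singVals A (g (g.symm i)) :=
    Tuple.monotone_sort (singVals A) (Nat.zero_le _)
  rw [Equiv.apply_symm_apply, hi'] at hmin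
  rw [sigma, dif_pos ⟨by omega, le_rfl⟩]
  simp only [Nat.sub_self]
  exact le_antisymm hmin (singVals_nonneg A _)

end SingularValues

theorem stmt11 :
    sigma (!![1, 1, 1, 1; 1, 1, 1, 0; 1, 0, 0, 0] : Matrix (Fin 3) (Fin 4) ℂ) 1 ^ 2 < 7 ∧
    1 < sigma (!![1, 1, 1, 1; 1, 1, 1, 0; 1, 0, 0, 0] : Matrix (Fin 3) (Fin 4) ℂ) 2 ^ 2 +
        sigma (!![1, 1, 1, 1; 1, 1, 1, 0; 1, 0, 0, 0] : Matrix (Fin 3) (Fin 4) ℂ) 3 ^ 2 := by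
  set A : Matrix (Fin 3) (Fin 4) ℂ := !![1, 1, 1, 1; 1, 1, 1, 0; 1, 0, 0, 0]
  have hgram : Aᴴ * A = !![3, 2, 2, 1; 2, 2, 2, 1; 2, 2, 2, 1; 1, 1, 1, 1] := by
    ext i j
    fin_cases i <;> fin_cases j <;> norm_num [A, mul_apply, Fin.sum_univ_succ]
  have hfrob : ∑ i, ∑ j, ‖A i j‖ ^ 2 = 8 := by
    norm_num [A, Fin.sum_univ_succ]
  have hfourth : ∑ i, singVals A i ^ 4 = 48 := by
    have htrace : (Aᴴ * A * (Aᴴ * A)).trace = 48 := by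
      rw [hgram]
      norm_num [trace, Fin.sum_univ_succ]
    exact_mod_cast (sum_singVals_pow_four A).trans htrace
  have hsq := sum_sigma_sq A
  rw [sum_singVals_sq, hfrob, Fin.sum_univ_four] at hsq
  have htop : sigma A 1 ^ 4 ≤ 48 := hfourth ▸ sigma_pow_le_sum A 0 4
  have hlast : sigma A 4 = 0 := sigma_card_eq_zero A (by norm_num)
  norm_num [hlast] at hsq
  constructor <;> nlinarith [sq_nonneg (sigma A 1 ^ 2 - 7)]
end

section
/- If n ≥ 1 and 3n < m ≤ 4n, then ψ_n(m) ≤ √(m + 2√(m−2)). Moreover, writing m = 4k + s with 1 ≤ s ≤ 3, one has ψ_n(m) ≤ √(m + 2√(3(m−1)/4)) if m ≡ 1 (mod 4), ψ_n(m) ≤ √(m + 2√(3(m−3)/4)) if m ≡ 3 (mod 4), and ψ_n(m) ≤ √(m + 2√(m−2)) if m ≡ 2 (mod 4). -/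
open Matrix BigOperators

/-!
Write `m = 4k + s` with `1 ≤ s ≤ 4`. The witness `A` has ones in the first four rows of the first
`k` columns and in the first `s` rows of column `k` (counting from `0`). It equals `u vᵀ + w eᵀ`,
where `u, w` indicate the first `4` and `s` rows and `v, e` the first `k` columns and column `k`;
since `v ⟂ e`, `A Aᴴ = k u uᵀ + w wᵀ`. So `A` has rank at most two, `tr (A Aᴴ) = m` and
`tr ((A Aᴴ)²) = m² - 2 s (4 - s) k`. For rank at most two `‖A‖* = √(σ₁² + σ₂² + 2 σ₁ σ₂)`, and
`σ₁² σ₂²` is read off these two traces: `‖A‖* = √(m + 2 √(s (4 - s) k))`. The cases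
`m ≡ 1, 3, 2 (mod 4)` are `s = 1, 3, 2`, and `s (4 - s) k ≤ m - 2` for every `s`.
For `n ≤ 3` no admissible matrix exists (`m > n²`), and `psi n m = sInf ∅ = 0`.
-/

open Finset

lemma Real.sqrt_add_sqrt {x y : ℝ} (hx : 0 ≤ x) (hy : 0 ≤ y) :
    √x + √y = √(x + y + 2 * √(x * y)) := by
  rw [← Real.sqrt_sq (by positivity : 0 ≤ √x + √y), add_sq, Real.sq_sqrt hx, Real.sq_sqrt hy,
    Real.sqrt_mul hx]
  ring_nf

lemma sum_sqrt_eq_of_card_support_le_two {ι : Type*} [Fintype ι] {e : ι → ℝ} (he : ∀ i, 0 ≤ e i)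
    (hsupp : #{i | e i ≠ 0} ≤ 2) {M c : ℝ} (hM : ∑ i, e i = M)
    (hc : ∑ i, e i ^ 2 = M ^ 2 - 2 * c) :
    ∑ i, √(e i) = √(M + 2 * √c) := by
  classical
  set S : Finset ι := {i | e i ≠ 0}
  have hS : ∀ f : ι → ℝ, (∀ i, e i = 0 → f i = 0) → ∑ i, f i = ∑ i ∈ S, f i := fun f hf =>
    (sum_subset (subset_univ S) fun i _ hi => hf i (by simpa [S] using hi)).symm
  rw [hS _ fun _ h => h] at hM
  rw [hS _ fun _ h => by simp [h]] at hc
  rw [hS _ fun _ h => by simp [h]]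
  clear_value S
  obtain h | h | h : #S = 0 ∨ #S = 1 ∨ #S = 2 := by omega
  · obtain rfl : S = ∅ := card_eq_zero.mp h
    simp only [sum_empty] at hM hc ⊢
    obtain rfl : c = 0 := by nlinarith
    simp [← hM]
  · obtain ⟨a, rfl⟩ := card_eq_one.mp h
    simp only [sum_singleton] at hM hc ⊢
    obtain rfl : c = 0 := by subst hM; linarith
    simp [hM]
  · obtain ⟨a, b, hab, rfl⟩ := card_eq_two.mp h
    simp only [sum_pair hab] at hM hc ⊢
    rw [Real.sqrt_add_sqrt (he a) (he b), ← hM]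
    subst hM
    congr
    linarith

namespace Matrix

lemma IsHermitian.trace_mul_self_eq_sum_sq {𝕜 n : Type*} [RCLike 𝕜] [Fintype n] [DecidableEq n]
    {A : Matrix n n 𝕜} (hA : A.IsHermitian) :
    (A * A).trace = ∑ i, (hA.eigenvalues i : 𝕜) ^ 2 := by
  conv_lhs => rw [hA.spectral_theorem]
  rw [← map_mul, Unitary.conjStarAlgAut_apply, trace_mul_cycle, Unitary.coe_star_mul_self,
    one_mul, diagonal_mul_diagonal, trace_diagonal]
  simp [sq]

lemma rank_vecMulVec_add_vecMulVec_le {R m n : Type*} [CommRing R] [StrongRankCondition R]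
    [Fintype m] [Fintype n] (u w : m → R) (v x : n → R) :
    (vecMulVec u v + vecMulVec w x).rank ≤ 2 := by
  have : vecMulVec u v + vecMulVec w x = of (fun i => ![u i, w i]) * of ![v, x] := by
    ext i j; simp [mul_apply, Fin.sum_univ_two, vecMulVec_apply]
  rw [this]
  exact (rank_mul_le_left _ _).trans ((rank_le_card_width _).trans (by simp))

end Matrix

open scoped ComplexOrder in
lemma traceNorm_eq_of_rank_le_two {m n : ℕ} {A : Matrix (Fin m) (Fin n) ℂ} (hA : A.rank ≤ 2)
    {M c : ℝ} (hM : (A * Aᴴ).trace = M) (hc : (A * Aᴴ * (A * Aᴴ)).trace = M ^ 2 - 2 * c) :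
    traceNorm A = √(M + 2 * √c) := by
  have hB := isHermitian_conjTranspose_mul_self A
  refine sum_sqrt_eq_of_card_support_le_two (eigenvalues_conjTranspose_mul_self_nonneg A) ?_ ?_ ?_
  · rw [← Fintype.card_subtype, ← hB.rank_eq_card_non_zero_eigs, rank_conjTranspose_mul_self]
    exact hA
  · have h := hB.trace_eq_sum_eigenvalues
    rw [trace_mul_comm, hM, RCLike.ofReal_eq_complex_ofReal] at h
    exact_mod_cast h.symm
  · have h := hB.trace_mul_self_eq_sum_sq
    have hcyc : (Aᴴ * A * (Aᴴ * A)).trace = (A * Aᴴ * (A * Aᴴ)).trace := by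
      rw [← Matrix.mul_assoc, trace_mul_comm]
      simp only [Matrix.mul_assoc]
    rw [hcyc, hc, RCLike.ofReal_eq_complex_ofReal] at h
    exact_mod_cast h.symm

lemma onesCount_le {a b : ℕ} (A : Matrix (Fin a) (Fin b) ℂ) : onesCount A ≤ a * b := by
  unfold onesCount
  exact (card_filter_le _ _).trans (by simp)

lemma onesCount_eq_trace_mul_conjTranspose {a b : ℕ} {A : Matrix (Fin a) (Fin b) ℂ}
    (hA : ∀ i j, A i j = 0 ∨ A i j = 1) : (onesCount A : ℂ) = (A * Aᴴ).trace := by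
  classical
  have hentry : ∀ i j, A i j * star (A i j) = if A i j = 1 then 1 else 0 := fun i j => by
    rcases hA i j with h | h <;> simp [h]
  simp only [onesCount, trace, diag_apply, mul_apply, conjTranspose_apply, hentry,
    ← Fintype.sum_prod_type', card_filter, Nat.cast_sum, Nat.cast_ite, Nat.cast_one, Nat.cast_zero]

lemma traceNorm_nonneg {m n : ℕ} (A : Matrix (Fin m) (Fin n) ℂ) : 0 ≤ traceNorm A :=
  sum_nonneg fun _ _ => Real.sqrt_nonneg _

lemma psi_le_traceNorm {n m : ℕ} {A : Matrix (Fin n) (Fin n) ℂ}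
    (hA : ∀ i j, A i j = 0 ∨ A i j = 1) (hm : onesCount A = m) : psi n m ≤ traceNorm A :=
  csInf_le ⟨0, fun _ ⟨B, _, _, hB⟩ => hB ▸ traceNorm_nonneg B⟩ ⟨A, hA, hm, rfl⟩

lemma psi_eq_zero_of_mul_self_lt {n m : ℕ} (h : n * n < m) : psi n m = 0 := by
  refine (congrArg sInf (Set.eq_empty_of_forall_notMem ?_)).trans Real.sInf_empty
  rintro _ ⟨A, -, hm, -⟩
  exact h.not_ge (hm ▸ onesCount_le A)

def prefixIndicator (n c : ℕ) : Fin n → ℂ := fun i => if (i : ℕ) < c then 1 else 0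

namespace prefixIndicator

lemma star_eq (n c : ℕ) : star (prefixIndicator n c) = prefixIndicator n c := by
  ext i; simp [prefixIndicator, apply_ite star]

lemma dotProduct_eq (n a b : ℕ) :
    prefixIndicator n a ⬝ᵥ prefixIndicator n b = (min n (min a b) : ℕ) := by
  simp only [dotProduct, prefixIndicator, mul_ite, mul_one, mul_zero, ← ite_and, ← lt_min_iff]
  rw [sum_ite, sum_const_zero, add_zero, sum_const, nsmul_one, Fin.card_filter_val_lt, min_comm b a]

end prefixIndicator

def blockMatrix (n s k : ℕ) : Matrix (Fin n) (Fin n) ℂ :=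
  of fun i j => if (i : ℕ) < 4 ∧ (j : ℕ) < k ∨ (i : ℕ) < s ∧ (j : ℕ) = k then 1 else 0

namespace blockMatrix

variable {n s k : ℕ}

lemma zero_or_one (i j : Fin n) : blockMatrix n s k i j = 0 ∨ blockMatrix n s k i j = 1 := by
  simp only [blockMatrix, of_apply]; split_ifs <;> simp

lemma eq_add_vecMulVec (hs : s ≤ 4) : blockMatrix n s k =
    vecMulVec (prefixIndicator n 4) (prefixIndicator n k) +
      vecMulVec (prefixIndicator n s) (prefixIndicator n (k + 1) - prefixIndicator n k) := by
  ext i j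
  simp only [blockMatrix, prefixIndicator, of_apply, Matrix.add_apply, vecMulVec_apply, Pi.sub_apply]
  split_ifs <;> first | omega | norm_num

lemma mul_conjTranspose (hs : s ≤ 4) (hk : k < n) : blockMatrix n s k * (blockMatrix n s k)ᴴ =
    (k : ℂ) • vecMulVec (prefixIndicator n 4) (prefixIndicator n 4) +
      vecMulVec (prefixIndicator n s) (prefixIndicator n s) := by
  rw [eq_add_vecMulVec hs]
  set e := prefixIndicator n (k + 1) - prefixIndicator n k
  have hvv : prefixIndicator n k ⬝ᵥ prefixIndicator n k = k := by
    rw [prefixIndicator.dotProduct_eq]; congr; omega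
  have hve : prefixIndicator n k ⬝ᵥ e = 0 := by
    simp only [e, dotProduct_sub, prefixIndicator.dotProduct_eq]
    rw [sub_eq_zero]; congr 1; omega
  have hee : e ⬝ᵥ e = 1 := by
    simp only [e, dotProduct_sub, sub_dotProduct, prefixIndicator.dotProduct_eq]
    rw [show min n (min (k + 1) (k + 1)) = k + 1 by omega, show min n (min (k + 1) k) = k by omega,
      show min n (min k (k + 1)) = k by omega, show min n (min k k) = k by omega]
    push_cast; ring
  have hstar : star e = e := by simp [e, star_sub, prefixIndicator.star_eq]
  simp only [conjTranspose_add, conjTranspose_vecMulVec, prefixIndicator.star_eq, hstar, add_mul,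
    mul_add, vecMulVec_mul_vecMulVec, hvv, hve, dotProduct_comm e, hee, zero_smul, vecMulVec_zero,
    add_zero, zero_add, one_smul, vecMulVec_smul]

variable (hs : s ≤ 4) (hk : k < n) (hn : 4 ≤ n)
include hs hk hn

lemma trace_mul_conjTranspose :
    (blockMatrix n s k * (blockMatrix n s k)ᴴ).trace = 4 * k + s := by
  rw [mul_conjTranspose hs hk]
  simp only [trace_add, trace_smul, trace_vecMulVec, prefixIndicator.dotProduct_eq,
    show min n (min 4 4) = 4 by omega, show min n (min s s) = s by omega]
  simp [mul_comm]

lemma trace_mul_conjTranspose_sq :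
    (blockMatrix n s k * (blockMatrix n s k)ᴴ * (blockMatrix n s k * (blockMatrix n s k)ᴴ)).trace =
      16 * k ^ 2 + 2 * k * s ^ 2 + s ^ 2 := by
  rw [mul_conjTranspose hs hk]
  simp only [add_mul, mul_add, Matrix.smul_mul, Matrix.mul_smul, vecMulVec_mul_vecMulVec,
    vecMulVec_smul, trace_add, trace_smul, trace_vecMulVec, prefixIndicator.dotProduct_eq,
    show min n (min 4 4) = 4 by omega, show min n (min s s) = s by omega,
    show min n (min 4 s) = s by omega, show min n (min s 4) = s by omega, smul_eq_mul]
  push_cast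
  ring

lemma onesCount_eq : onesCount (blockMatrix n s k) = 4 * k + s := by
  have h := (onesCount_eq_trace_mul_conjTranspose zero_or_one).trans
    (trace_mul_conjTranspose hs hk hn)
  exact_mod_cast h

lemma traceNorm_eq :
    traceNorm (blockMatrix n s k) = √(4 * k + s + 2 * √(s * (4 - s) * k)) := by
  refine traceNorm_eq_of_rank_le_two (eq_add_vecMulVec hs ▸ rank_vecMulVec_add_vecMulVec_le ..)
    (by exact_mod_cast trace_mul_conjTranspose hs hk hn) ?_
  rw [trace_mul_conjTranspose_sq hs hk hn]
  push_cast
  ring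

end blockMatrix

theorem stmt18_general (n m : ℕ) (h1 : 3 * n < m) (h2 : m ≤ 4 * n) :
    psi n m ≤ Real.sqrt ((m : ℝ) + 2 * Real.sqrt ((m : ℝ) - 2)) ∧
    (m % 4 = 1 → psi n m ≤ Real.sqrt ((m : ℝ) + 2 * Real.sqrt (3 * ((m : ℝ) - 1) / 4))) ∧
    (m % 4 = 3 → psi n m ≤ Real.sqrt ((m : ℝ) + 2 * Real.sqrt (3 * ((m : ℝ) - 3) / 4))) ∧
    (m % 4 = 2 → psi n m ≤ Real.sqrt ((m : ℝ) + 2 * Real.sqrt ((m : ℝ) - 2))) := by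
  obtain hn | hn := lt_or_ge n 4
  · have h0 : psi n m = 0 := psi_eq_zero_of_mul_self_lt (by interval_cases n <;> omega)
    simp only [h0, Real.sqrt_nonneg, implies_true, and_self]
  obtain ⟨k, s, hs1, hs4, rfl⟩ : ∃ k s, 1 ≤ s ∧ s ≤ 4 ∧ m = 4 * k + s :=
    ⟨(m - 1) / 4, (m - 1) % 4 + 1, by omega, by omega, by omega⟩
  have hk : k < n := by omega
  have hk1 : (1 : ℝ) ≤ k := by exact_mod_cast (by omega : 1 ≤ k)
  have hbound : ∀ c : ℝ, s * (4 - s) * k ≤ c →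
      psi n (4 * k + s) ≤ √(((4 * k + s : ℕ) : ℝ) + 2 * √c) := fun c hc => by
    refine (psi_le_traceNorm blockMatrix.zero_or_one (blockMatrix.onesCount_eq hs4 hk hn)).trans ?_
    rw [blockMatrix.traceNorm_eq hs4 hk hn]
    push_cast
    gcongr
  refine ⟨hbound _ ?_, fun h => hbound _ ?_, fun h => hbound _ ?_, fun h => hbound _ ?_⟩ <;>
  · push_cast
    interval_cases s <;> first | omega | (norm_num <;> linarith)

theorem stmt18 (n m : ℕ) (hn : 1 ≤ n) (h1 : 3 * n < m) (h2 : m ≤ 4 * n) :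
    psi n m ≤ Real.sqrt ((m : ℝ) + 2 * Real.sqrt ((m : ℝ) - 2)) ∧
    (m % 4 = 1 → psi n m ≤ Real.sqrt ((m : ℝ) + 2 * Real.sqrt (3 * ((m : ℝ) - 1) / 4))) ∧
    (m % 4 = 3 → psi n m ≤ Real.sqrt ((m : ℝ) + 2 * Real.sqrt (3 * ((m : ℝ) - 3) / 4))) ∧
    (m % 4 = 2 → psi n m ≤ Real.sqrt ((m : ℝ) + 2 * Real.sqrt ((m : ℝ) - 2))) :=
  stmt18_general n m h1 h2
end
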